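/- Let A ∈ ℤ^{d×n} be of rank d. The toric Jacobian det J_{A,b}(v), regarded as a Laurent polynomial in the variables β ∈ (ℂ*)ⁿ and v ∈ (ℂ*)^d, is not identically zero; in particular, for v = (1,…,1) and β = (−i,…,−i) it equals det(−i·A·Aᵀ) ≠ 0. Moreover, for generic β ∈ (ℂ*)ⁿ and generic ω ∈ ℂ^d, the system A·ψ_{A,b}(v) = ω has only finitely many solutions v ∈ (ℂ*)^d, i.e. the fiber pr_ω^{−1}(ω) of the projection pr_ω : W_{A,b} → ℂ^d is finite. -/

import Mathlib

noncomputable section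


/-- A subset of `ℂⁿ` is Zariski closed if it is the common zero locus
of a set of polynomials. -/
def ZClosed {n : ℕ} (S : Set (Fin n → ℂ)) : Prop :=
  ∃ I : Set (MvPolynomial (Fin n) ℂ),
    S = {x | ∀ p ∈ I, MvPolynomial.eval x p = 0}

/-- Irreducibility with respect to the Zariski topology on `ℂⁿ`. -/
def ZIrred {n : ℕ} (S : Set (Fin n → ℂ)) : Prop :=
  S.Nonempty ∧ ∀ F G : Set (Fin n → ℂ), ZClosed F → ZClosed G →
    S ⊆ F ∪ G → (S ⊆ F ∨ S ⊆ G)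

/-- Dimension of a subset of `ℂⁿ`: Krull dimension of the poset of irreducible
Zariski closed subsets contained in it. -/
def ZDim {n : ℕ} (S : Set (Fin n → ℂ)) : WithBot ℕ∞ :=
  Order.krullDim {T : Set (Fin n → ℂ) // ZClosed T ∧ ZIrred T ∧ T ⊆ S}

/-- Zariski closure in `ℂⁿ`. -/
def ZClosure {n : ℕ} (S : Set (Fin n → ℂ)) : Set (Fin n → ℂ) :=
  ⋂₀ {F | ZClosed F ∧ S ⊆ F}

/-- A property `P` of points of `ℂ^σ` holds generically if it holds on the
nonvanishing locus of some nonzero polynomial. -/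
def GenericProp {σ : Type} (P : (σ → ℂ) → Prop) : Prop :=
  ∃ p : MvPolynomial σ ℂ, p ≠ 0 ∧ ∀ x : σ → ℂ, MvPolynomial.eval x p ≠ 0 → P x

/-- `S ⊆ ℂⁿ` (of dimension `d`) has degree `k`: a generic affine-linear subspace of
codimension `d` meets `S` in exactly `k` points. -/
def HasVarietyDegree {n : ℕ} (S : Set (Fin n → ℂ)) (d k : ℕ) : Prop :=
  GenericProp (σ := Fin d × Option (Fin n)) fun c =>
    ({x ∈ S | ∀ j : Fin d, c (j, none) + ∑ i : Fin n, c (j, some i) * x i = 0}).ncard = k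

/-- The parametrization `ψ_{A,β}` with scaling vector `β`. -/
def psiBeta {d n : ℕ} (A : Matrix (Fin d) (Fin n) ℤ) (β : Fin n → ℂ) (v : Fin d → ℂ) :
    Fin n → ℂ :=
  fun ℓ => (β ℓ * ∏ k, v k ^ (A k ℓ) + (β ℓ)⁻¹ * ∏ k, v k ^ (-(A k ℓ))) / 2

/-- The toric Jacobi matrix `J_{A,b}(v) = ½ A · diag(β_ℓ v^{a_ℓ} - β_ℓ⁻¹ v^{-a_ℓ}) · Aᵀ`. -/
def toricJac {d n : ℕ} (A : Matrix (Fin d) (Fin n) ℤ) (β : Fin n → ℂ) (v : Fin d → ℂ) :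
    Matrix (Fin d) (Fin d) ℂ :=
  fun j k => (1 / 2 : ℂ) * ∑ ℓ, (A j ℓ : ℂ) *
    (β ℓ * ∏ k', v k' ^ (A k' ℓ) - (β ℓ)⁻¹ * ∏ k', v k' ^ (-(A k' ℓ))) * (A k ℓ : ℂ)

/-- The incidence variety `W_{A,b} = {(v,ω) : A ψ_{A,b}(v) = ω}`. -/
def Wset {d n : ℕ} (A : Matrix (Fin d) (Fin n) ℤ) (β : Fin n → ℂ) :
    Set ((Fin d → ℂ) × (Fin d → ℂ)) :=
  {p | (∀ k, p.1 k ≠ 0) ∧ ∀ i, ∑ ℓ, (A i ℓ : ℂ) * psiBeta A β p.1 ℓ = p.2 i}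

/-- The Lissajous discriminant `∇_{A,b}`, the Zariski closure of the branch locus. -/
def discLocus {d n : ℕ} (A : Matrix (Fin d) (Fin n) ℤ) (β : Fin n → ℂ) :
    Set (Fin d → ℂ) :=
  ZClosure {ω | ∃ v : Fin d → ℂ, (v, ω) ∈ Wset A β ∧ (toricJac A β v).det = 0}

/-- The projection `pr_ω : W → ℂ^d` has degree `e`: generic fibers have `e` points. -/
def HasProjDegree {d : ℕ} (W : Set ((Fin d → ℂ) × (Fin d → ℂ))) (e : ℕ) : Prop :=
  ∃ U : Set (Fin d → ℂ), ZClosed U ∧ U ≠ Set.univ ∧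
    ∀ ω ∉ U, ({v | (v, ω) ∈ W}).ncard = e

/-!
At `v = 𝟏`, `β = -i·𝟏` the toric Jacobi matrix is `-i A Aᵀ`, and `A Aᵀ` has the same rank `d`
as `A` because `ℚ` is an ordered field.

For the finiteness, treat `β` and `v` as the variables of the Laurent polynomial ring in `n + d`
variables, whose transcendence degree is `n + d`. For each `k`, the `n + d + 1` Laurent polynomials
`β`, `A ψ_{A,β}(v)` and `v_k` therefore satisfy a nonzero polynomial relation `P`. Wherever the
leading coefficient of `P` in its last variable does not vanish at `(β, ω)`, the `k`-th
coordinate of every solution of `A ψ_{A,β}(v) = ω` is one of the finitely many roots of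
`P(β, ω, ·)`.
-/

open Cardinal

universe u v

abbrev MvLaurent (K : Type u) (σ : Type v) [CommRing K] := AddMonoidAlgebra K (σ → ℤ)

theorem Subalgebra.val_zpow_mem {R A : Type*} [CommRing R] [Ring A] [Algebra R A]
    (T : Subalgebra R A) {w : Aˣ} (hw : (w : A) ∈ T) (hw' : ((w⁻¹ : Aˣ) : A) ∈ T) (k : ℤ) :
    ((w ^ k : Aˣ) : A) ∈ T := by
  cases k with
  | ofNat k => simpa using pow_mem hw k
  | negSucc k => simpa [zpow_negSucc] using pow_mem hw' (k + 1)

namespace MvLaurent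

variable {K : Type u} {σ : Type v} [CommRing K]

def monomialUnits : Multiplicative (σ → ℤ) →* (MvLaurent K σ)ˣ :=
  (AddMonoidAlgebra.of K (σ → ℤ)).toHomUnits

section Eval

variable [Fintype σ]

def evalMonoidHom (u : σ → Kˣ) : Multiplicative (σ → ℤ) →* K where
  toFun m := ∏ j, ((u j ^ m.toAdd j : Kˣ) : K)
  map_one' := by simp
  map_mul' m m' := by simp [zpow_add, Finset.prod_mul_distrib]

def eval (u : σ → Kˣ) : MvLaurent K σ →ₐ[K] K :=
  AddMonoidAlgebra.lift K K (σ → ℤ) (evalMonoidHom u)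

theorem eval_val_units (u : σ → Kˣ) (w : (MvLaurent K σ)ˣ) :
    eval u (w : MvLaurent K σ) = (Units.map (eval u : MvLaurent K σ →* K) w : K) :=
  rfl

end Eval

variable [DecidableEq σ]

def X (j : σ) : (MvLaurent K σ)ˣ := monomialUnits (.ofAdd (Pi.single j 1))

variable [Fintype σ]

theorem monomialUnits_eq_prod_X (m : σ → ℤ) :
    monomialUnits (.ofAdd m) = ∏ j, (X j : (MvLaurent K σ)ˣ) ^ m j := by
  conv_lhs => rw [← Finset.univ_sum_single m]
  simp only [X, ← map_zpow, ← ofAdd_zsmul, ← map_prod, ← ofAdd_sum]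
  congr 2
  refine Finset.sum_congr rfl fun j _ => ?_
  ext i
  by_cases h : i = j <;> simp [h]

theorem eval_X (u : σ → Kˣ) (j : σ) :
    eval u ((X j : (MvLaurent K σ)ˣ) : MvLaurent K σ) = u j := by
  simp [eval, X, monomialUnits, evalMonoidHom, Pi.single_apply, apply_ite Units.val]

theorem unitsMap_eval_X (u : σ → Kˣ) (j : σ) :
    Units.map (eval u : MvLaurent K σ →* K) (X j) = u j :=
  Units.ext (eval_X u j)

variable [IsDomain K]

theorem isAlgebraic_adjoin_range_X :
    Algebra.IsAlgebraic
      (Algebra.adjoin K (Set.range fun j => ((X j : (MvLaurent K σ)ˣ) : MvLaurent K σ)))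
      (MvLaurent K σ) := by
  set S := Algebra.adjoin K (Set.range fun j => ((X j : (MvLaurent K σ)ˣ) : MvLaurent K σ))
  have hX (j : σ) : IsAlgebraic S ((X j : (MvLaurent K σ)ˣ) : MvLaurent K σ) :=
    isAlgebraic_algebraMap (⟨_, Algebra.subset_adjoin ⟨j, rfl⟩⟩ : S)
  set T := Algebra.adjoin S ((Set.range fun j => ((X j : (MvLaurent K σ)ˣ) : MvLaurent K σ)) ∪
    Set.range fun j => (((X j)⁻¹ : (MvLaurent K σ)ˣ) : MvLaurent K σ))
  have hT (x : MvLaurent K σ) : x ∈ T := by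
    induction x using AddMonoidAlgebra.induction_on with
    | of m =>
      change ((monomialUnits (.ofAdd m) : (MvLaurent K σ)ˣ) : MvLaurent K σ) ∈ T
      rw [monomialUnits_eq_prod_X, Units.coe_prod]
      exact prod_mem fun j _ => T.val_zpow_mem (Algebra.subset_adjoin (.inl ⟨j, rfl⟩))
        (Algebra.subset_adjoin (.inr ⟨j, rfl⟩)) _
    | add x y hx hy => exact add_mem hx hy
    | smul r x hx => exact algebraMap_smul S r x ▸ T.smul_mem hx _
  have hTalg : T.IsAlgebraic := by
    refine Algebra.isAlgebraic_adjoin_iff.2 ?_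
    rintro _ (⟨j, rfl⟩ | ⟨j, rfl⟩)
    · exact hX j
    · let := (X (K := K) j).invertible
      exact (hX j).invOf
  exact ⟨fun x => hTalg x (hT x)⟩

theorem trdeg_le : Algebra.trdeg K (MvLaurent K σ) ≤ lift.{u} #σ := by
  have := isAlgebraic_adjoin_range_X (K := K) (σ := σ)
  refine (Algebra.IsAlgebraic.trdeg_le_cardinalMk K
    (Set.range fun j => ((X j : (MvLaurent K σ)ˣ) : MvLaurent K σ))).trans ?_
  simpa using Cardinal.mk_range_le_lift (f := fun j => ((X j : (MvLaurent K σ)ˣ) : MvLaurent K σ))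

theorem exists_ne_zero_aeval_eq_zero_of_card_lt {ι : Type*} [Fintype ι]
    (g : ι → MvLaurent K σ) (h : Fintype.card σ < Fintype.card ι) :
    ∃ P : MvPolynomial ι K, P ≠ 0 ∧ MvPolynomial.aeval g P = 0 := by
  by_contra! hg
  have hind : AlgebraicIndependent K g :=
    algebraicIndependent_iff.2 fun P hP => not_imp_not.1 (hg P) hP
  have hcard : Fintype.card ι ≤ Fintype.card σ := by
    simpa using hind.lift_cardinalMk_le_trdeg.trans (Cardinal.lift_le.2 trdeg_le)
  exact h.not_ge hcard

theorem exists_ne_zero_finite_setOf_coord (Φ : σ → MvLaurent K σ) (j : σ) :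
    ∃ q : MvPolynomial σ K, q ≠ 0 ∧ ∀ z : σ → K, MvPolynomial.eval z q ≠ 0 →
      {t : K | ∃ x : σ → Kˣ, (∀ i, eval x (Φ i) = z i) ∧ (x j : K) = t}.Finite := by
  set g : Option σ → MvLaurent K σ := fun o => o.elim (X j : (MvLaurent K σ)ˣ) Φ
  obtain ⟨P, hP, hPg⟩ := exists_ne_zero_aeval_eq_zero_of_card_lt g (by simp)
  set P' := MvPolynomial.optionEquivLeft K σ P
  have hP' : P' ≠ 0 := (EmbeddingLike.map_ne_zero_iff).2 hP
  refine ⟨P'.leadingCoeff, Polynomial.leadingCoeff_ne_zero.2 hP', fun z hz => ?_⟩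
  have hmap : P'.map (MvPolynomial.eval z) ≠ 0 := by
    intro h0
    apply hz
    rw [← Polynomial.coeff_natDegree, ← Polynomial.coeff_map, h0, Polynomial.coeff_zero]
  refine (Polynomial.finite_setOfPred_isRoot hmap).subset ?_
  rintro _ ⟨x, hx, rfl⟩
  have heval : (fun o : Option σ => o.elim (x j : K) z) = fun o => eval x (g o) := by
    funext o
    cases o with
    | none => exact (eval_X x j).symm
    | some i => exact (hx i).symm
  rw [Set.mem_ofPred_eq, Polynomial.IsRoot.def, ← MvPolynomial.optionEquivLeft_elim_eval, heval,
    ← MvPolynomial.aeval_eq_eval, ← MvPolynomial.comp_aeval_apply, hPg, map_zero]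

theorem exists_ne_zero_finite_fiber (Φ : σ → MvLaurent K σ) :
    ∃ q : MvPolynomial σ K, q ≠ 0 ∧ ∀ z : σ → K, MvPolynomial.eval z q ≠ 0 →
      {x : σ → Kˣ | ∀ i, eval x (Φ i) = z i}.Finite := by
  choose q hq hfin using exists_ne_zero_finite_setOf_coord Φ
  refine ⟨∏ j, q j, Finset.prod_ne_zero_iff.2 fun j _ => hq j, fun z hz => ?_⟩
  rw [map_prod, Finset.prod_ne_zero_iff] at hz
  have hinj : Function.Injective fun (x : σ → Kˣ) j => (x j : K) :=
    fun x y h => funext fun j => Units.ext (congrFun h j)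
  refine Set.Finite.of_finite_image ?_ hinj.injOn
  refine (Set.Finite.pi fun j => hfin j z (hz j (Finset.mem_univ j))).subset ?_
  rintro _ ⟨x, hx, rfl⟩ j -
  exact ⟨x, hx, rfl⟩

end MvLaurent

namespace Matrix

theorem isUnit_of_rank_eq_card {R m : Type*} [Field R] [Fintype m] [DecidableEq m]
    (M : Matrix m m R) (h : M.rank = Fintype.card m) : IsUnit M := by
  have hrange : LinearMap.range M.mulVecLin = ⊤ :=
    Submodule.eq_top_of_finrank_eq (by rw [← rank, h, Module.finrank_fintype_fun_eq_card])
  exact mulVec_surjective_iff_isUnit.1 (LinearMap.range_eq_top.1 hrange)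

theorem det_mul_transpose_ne_zero {R m n : Type*} [Field R] [LinearOrder R]
    [IsStrictOrderedRing R] [Fintype m] [DecidableEq m] [Fintype n] (M : Matrix m n R)
    (h : M.rank = Fintype.card m) : (M * Mᵀ).det ≠ 0 :=
  ((isUnit_iff_isUnit_det _).1
    ((M * Mᵀ).isUnit_of_rank_eq_card (by rw [rank_self_mul_transpose, h]))).ne_zero

end Matrix

section Toric

open Complex Matrix

variable {d n : ℕ} (A : Matrix (Fin d) (Fin n) ℤ)

theorem toricJac_neg_I_one : toricJac A (fun _ => -I) (fun _ => 1) =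
    Matrix.of fun j k : Fin d => -I * ∑ ℓ, (A j ℓ : ℂ) * (A k ℓ : ℂ) := by
  ext j k
  simp only [toricJac, _root_.one_zpow, Finset.prod_const_one, mul_one, inv_neg, inv_I,
    Matrix.of_apply, Finset.mul_sum]
  exact Finset.sum_congr rfl fun ℓ _ => by ring

theorem det_neg_I_mul_gram_ne_zero (hrank : (A.map fun z => (z : ℚ)).rank = d) :
    (Matrix.of fun j k : Fin d => -I * ∑ ℓ, (A j ℓ : ℂ) * (A k ℓ : ℂ)).det ≠ 0 := by
  set Aq := A.map fun z => (z : ℚ)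
  have hM : (Matrix.of fun j k : Fin d => -I * ∑ ℓ, (A j ℓ : ℂ) * (A k ℓ : ℂ)) =
      -I • (Aq * Aqᵀ).map fun x => (x : ℂ) := by
    ext j k
    simp [Aq, Matrix.mul_apply]
  rw [hM, det_smul, ← Rat.cast_det]
  exact mul_ne_zero (pow_ne_zero _ (neg_ne_zero.2 I_ne_zero))
    (Rat.cast_ne_zero.2 (Aq.det_mul_transpose_ne_zero (by rw [hrank, Fintype.card_fin])))

def toricMonomial (ℓ : Fin n) : (MvLaurent ℂ (Fin n ⊕ Fin d))ˣ :=
  MvLaurent.X (.inl ℓ) * ∏ k, MvLaurent.X (.inr k) ^ A k ℓ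

-- `A ψ_{A,β}(v)`, with `β` and `v` as Laurent variables.
def toricSystem (i : Fin d) : MvLaurent ℂ (Fin n ⊕ Fin d) :=
  ∑ ℓ, ((A i ℓ : ℂ) / 2) • ((toricMonomial A ℓ : MvLaurent ℂ (Fin n ⊕ Fin d)) +
    ((toricMonomial A ℓ)⁻¹ : (MvLaurent ℂ (Fin n ⊕ Fin d))ˣ))

theorem unitsMap_eval_toricMonomial (x : Fin n ⊕ Fin d → ℂˣ) (ℓ : Fin n) :
    Units.map (MvLaurent.eval x : MvLaurent ℂ (Fin n ⊕ Fin d) →* ℂ) (toricMonomial A ℓ) =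
      x (.inl ℓ) * ∏ k, x (.inr k) ^ A k ℓ := by
  simp only [toricMonomial, map_mul, map_prod, map_zpow, MvLaurent.unitsMap_eval_X]

theorem eval_toricSystem (x : Fin n ⊕ Fin d → ℂˣ) (i : Fin d) :
    MvLaurent.eval x (toricSystem A i) =
      ∑ ℓ, (A i ℓ : ℂ) * psiBeta A (fun ℓ => x (.inl ℓ)) (fun k => x (.inr k)) ℓ := by
  simp only [toricSystem, map_sum, map_smul, map_add, MvLaurent.eval_val_units, map_inv,
    unitsMap_eval_toricMonomial]
  refine Finset.sum_congr rfl fun ℓ _ => ?_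
  simp only [psiBeta, Units.val_inv_eq_inv_val, Units.val_mul, Units.coe_prod,
    Units.val_zpow_eq_zpow_val, mul_inv, ← Finset.prod_inv_distrib, ← _root_.zpow_neg, smul_eq_mul]
  ring

theorem genericProp_finite_solutions : GenericProp (σ := Fin n ⊕ Fin d) fun z =>
    {v : Fin d → ℂ | (∀ k, v k ≠ 0) ∧
      ∀ i, ∑ ℓ, (A i ℓ : ℂ) * psiBeta A (fun j => z (.inl j)) v ℓ = z (.inr i)}.Finite := by
  obtain ⟨q, hq, hfin⟩ := MvLaurent.exists_ne_zero_finite_fiber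
    (Sum.elim (fun ℓ => (MvLaurent.X (.inl ℓ) : (MvLaurent ℂ (Fin n ⊕ Fin d))ˣ)) (toricSystem A))
  refine ⟨q * ∏ ℓ, MvPolynomial.X (.inl ℓ),
    mul_ne_zero hq (Finset.prod_ne_zero_iff.2 fun ℓ _ => MvPolynomial.X_ne_zero _), fun z hz => ?_⟩
  rw [map_mul, map_prod, mul_ne_zero_iff, Finset.prod_ne_zero_iff] at hz
  simp only [MvPolynomial.eval_X] at hz
  refine ((hfin z hz.1).image fun x k => (x (.inr k) : ℂ)).subset ?_
  rintro v ⟨hv, hsol⟩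
  refine ⟨Sum.elim (fun ℓ => Units.mk0 _ (hz.2 ℓ (Finset.mem_univ ℓ)))
    fun k => Units.mk0 (v k) (hv k), ?_, rfl⟩
  rintro (ℓ | i)
  · simp [MvLaurent.eval_X]
  · simpa [eval_toricSystem] using hsol i

end Toric

/-- Lemma 6.1: the toric Jacobian `det J_{A,b}` is not identically zero in `(β, v)`;
at `v = 𝟏`, `β = -i·𝟏` it equals `det(-i A Aᵀ) ≠ 0`; and for generic `β` and `ω` the
system `A ψ_{A,b}(v) = ω` has finitely many solutions `v ∈ (ℂ*)^d`. -/
theorem stmt15 {d n : ℕ} (A : Matrix (Fin d) (Fin n) ℤ)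
    (hrank : (A.map fun z => (z : ℚ)).rank = d) :
    (∃ (β : Fin n → ℂ) (v : Fin d → ℂ), (∀ ℓ, β ℓ ≠ 0) ∧ (∀ k, v k ≠ 0) ∧
      (toricJac A β v).det ≠ 0) ∧
    (toricJac A (fun _ => -Complex.I) (fun _ => 1)).det =
      Matrix.det (Matrix.of fun j k : Fin d =>
        -Complex.I * ∑ ℓ, (A j ℓ : ℂ) * (A k ℓ : ℂ)) ∧
    (toricJac A (fun _ => -Complex.I) (fun _ => 1)).det ≠ 0 ∧
    GenericProp (σ := Sum (Fin n) (Fin d)) (fun z =>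
      Set.Finite {v : Fin d → ℂ | (∀ k, v k ≠ 0) ∧
        ∀ i, ∑ ℓ, (A i ℓ : ℂ) * psiBeta A (fun j => z (Sum.inl j)) v ℓ =
          z (Sum.inr i)}) := by
  have hdet : (toricJac A (fun _ => -Complex.I) (fun _ => 1)).det ≠ 0 := by
    rw [toricJac_neg_I_one]
    exact det_neg_I_mul_gram_ne_zero A hrank
  exact ⟨⟨_, _, fun _ => neg_ne_zero.2 Complex.I_ne_zero, fun _ => one_ne_zero, hdet⟩,
    congrArg _ (toricJac_neg_I_one A), hdet, genericProp_finite_solutions A⟩
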